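/- arXiv:2211.06684 — 8 statements merged into one kernel-verified Lean document; each statement's English description precedes it below -/
import Mathlib

section
/- (Bias part of Lemma 1.) The bias of the doubly robust loss satisfies |E[L_DR] − L_ideal| = (1/|D|) | Σ_{d∈D} (p_d − p̂_d)(e_d − ê_d)/p̂_d |. -/
open MeasureTheory ProbabilityTheory Finset Real

/-- Bias part of Lemma 1: The bias of the doubly robust loss satisfies
`|E[L_DR] − L_ideal| = (1/|D|) | Σ_{d∈D} (p_d − p̂_d)(e_d − ê_d)/p̂_d |`. -/
theorem bias_DR_loss
    {Ω : Type*} [MeasurableSpace Ω] (P : Measure Ω) [IsProbabilityMeasure P]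
    {ι : Type*} [Fintype ι] [Nonempty ι]
    (p phat e ehat : ι → ℝ) (o : ι → Ω → ℝ)
    (hp : ∀ d, p d ∈ Set.Icc (0 : ℝ) 1)
    (hphat : ∀ d, phat d ∈ Set.Ioc (0 : ℝ) 1)
    (ho01 : ∀ d ω, o d ω = 0 ∨ o d ω = 1)
    (homeas : ∀ d, Measurable (o d))
    (hoE : ∀ d, ∫ ω, o d ω ∂P = p d) :
    |(∫ ω, (1 / (Fintype.card ι : ℝ)) *
          ∑ d, (ehat d + o d ω * (e d - ehat d) / phat d) ∂P)
        - (1 / (Fintype.card ι : ℝ)) * ∑ d, e d|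
      = (1 / (Fintype.card ι : ℝ)) *
        |∑ d, (p d - phat d) * (e d - ehat d) / phat d| := by
  have hoInt : ∀ d, Integrable (o d) P := by
    intro d
    refine Integrable.mono' (integrable_const (1 : ℝ)) (homeas d).aestronglyMeasurable ?_
    filter_upwards with ω
    rcases ho01 d ω with h | h <;> simp [h]
  have hInt : ∀ d, Integrable (fun ω => ehat d + o d ω * (e d - ehat d) / phat d) P := by
    intro d
    have : Integrable (fun ω => o d ω * ((e d - ehat d) / phat d)) P :=
      (hoInt d).mul_const _
    have h2 := (integrable_const (ehat d)).add this
    simpa [mul_div_assoc] using h2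
  have hI : (∫ ω, (1 / (Fintype.card ι : ℝ)) *
        ∑ d, (ehat d + o d ω * (e d - ehat d) / phat d) ∂P)
      = (1 / (Fintype.card ι : ℝ)) *
        ∑ d, (ehat d + p d * (e d - ehat d) / phat d) := by
    rw [integral_const_mul, integral_finset_sum _ (fun d _ => hInt d)]
    congr 1
    refine Finset.sum_congr rfl fun d _ => ?_
    have hInt' : Integrable (fun ω => o d ω * (e d - ehat d) / phat d) P := by
      simpa [mul_div_assoc] using (hoInt d).mul_const ((e d - ehat d) / phat d)
    rw [integral_add (integrable_const _) hInt', integral_const]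
    simp only [measure_univ, probReal_univ, ENNReal.toReal_one, smul_eq_mul, one_mul]
    congr 1
    have : (∫ ω, o d ω * (e d - ehat d) / phat d ∂P)
        = (∫ ω, o d ω ∂P) * ((e d - ehat d) / phat d) := by
      simp only [mul_div_assoc]
      exact integral_mul_const _ _
    rw [this, hoE d, mul_div_assoc]
  rw [hI, ← mul_sub, ← Finset.sum_sub_distrib, abs_mul]
  have hN : |(1 : ℝ) / (Fintype.card ι : ℝ)| = 1 / (Fintype.card ι : ℝ) := by
    rw [abs_of_nonneg]
    positivity
  rw [hN]
  congr 1
  congr 1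
  refine Finset.sum_congr rfl fun d _ => ?_
  have hpd := (hphat d).1
  field_simp
  ring
end

section
/- (Variance part of Lemma 1.) If the family (o_d)_{d∈D} is independent, then the variance of the doubly robust loss satisfies Var[L_DR] = (1/|D|²) Σ_{d∈D} p_d (1 − p_d) (ê_d − e_d)² / p̂_d². -/
open MeasureTheory ProbabilityTheory Finset Real

lemma bernoulli_var {Ω : Type*} [MeasurableSpace Ω] (P : Measure Ω) [IsProbabilityMeasure P]
    (o : Ω → ℝ) (p a b : ℝ) (ho01 : ∀ ω, o ω = 0 ∨ o ω = 1)
    (homeas : Measurable o) (hoE : ∫ ω, o ω ∂P = p) :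
    variance (fun ω => a + b * o ω) P = b ^ 2 * (p * (1 - p)) := by
  have hmem : MemLp (fun ω => a + b * o ω) 2 P := by
    apply MemLp.of_bound ((measurable_const.add (homeas.const_mul b)).aestronglyMeasurable)
      (|a| + |b|)
    filter_upwards with ω
    rcases ho01 ω with h | h <;> simp [h, abs_add_le, Real.norm_eq_abs] <;>
      calc |a + b| ≤ |a| + |b| := abs_add_le _ _
        _ ≤ _ := le_refl _
  have hsq : ∀ ω, (a + b * o ω) ^ 2 = a ^ 2 + (2 * a * b + b ^ 2) * o ω := by
    intro ω; rcases ho01 ω with h | h <;> simp [h] <;> ring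
  have hint : Integrable o P := by
    apply Integrable.mono' (integrable_const 1) homeas.aestronglyMeasurable
    filter_upwards with ω; rcases ho01 ω with h | h <;> simp [h]
  rw [variance_eq_sub hmem]
  have h1 : ∫ ω, (a + b * o ω) ^ 2 ∂P = a ^ 2 + (2 * a * b + b ^ 2) * p := by
    simp only [hsq]
    rw [integral_add (integrable_const _) (hint.const_mul _), integral_const,
      integral_const_mul, hoE]
    simp
  have h2 : ∫ ω, a + b * o ω ∂P = a + b * p := by
    rw [integral_add (integrable_const _) (hint.const_mul _), integral_const,
      integral_const_mul, hoE]
    simp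
  simp only [Pi.pow_apply]
  rw [h1, h2]; ring

/-- Variance part of Lemma 1: If the family `(o_d)_{d∈D}` is
independent, then the variance of the doubly robust loss satisfies
`Var[L_DR] = (1/|D|²) Σ_{d∈D} p_d (1 − p_d) (ê_d − e_d)² / p̂_d²`. -/
theorem variance_DR_loss
    {Ω : Type*} [MeasurableSpace Ω] (P : Measure Ω) [IsProbabilityMeasure P]
    {ι : Type*} [Fintype ι] [Nonempty ι]
    (p phat e ehat : ι → ℝ) (o : ι → Ω → ℝ)
    (hp : ∀ d, p d ∈ Set.Icc (0 : ℝ) 1)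
    (hphat : ∀ d, phat d ∈ Set.Ioc (0 : ℝ) 1)
    (ho01 : ∀ d ω, o d ω = 0 ∨ o d ω = 1)
    (homeas : ∀ d, Measurable (o d))
    (hoE : ∀ d, ∫ ω, o d ω ∂P = p d)
    (hindep : iIndepFun o P) :
    variance
        (fun ω => (1 / (Fintype.card ι : ℝ)) *
          ∑ d, (ehat d + o d ω * (e d - ehat d) / phat d)) P
      = (1 / (Fintype.card ι : ℝ) ^ 2) *
        ∑ d, p d * (1 - p d) * (ehat d - e d) ^ 2 / (phat d) ^ 2 := by
  set X : ι → Ω → ℝ := fun d ω => ehat d + (e d - ehat d) / phat d * o d ω with hX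
  have hXmem : ∀ d, MemLp (X d) 2 P := by
    intro d
    apply MemLp.of_bound (((homeas d).const_mul _).const_add _).aestronglyMeasurable
      (|ehat d| + |(e d - ehat d) / phat d|)
    filter_upwards with ω
    rcases ho01 d ω with h | h <;> simp [hX, h, Real.norm_eq_abs]
    · exact abs_add_le _ _
  have hXindep : ∀ i j, i ≠ j → IndepFun (X i) (X j) P := by
    intro i j hij
    exact (hindep.indepFun hij).comp
      ((measurable_const_mul _).const_add (ehat i))
      ((measurable_const_mul _).const_add (ehat j))
  have hvar : ∀ d, variance (X d) P
      = p d * (1 - p d) * (ehat d - e d) ^ 2 / (phat d) ^ 2 := by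
    intro d
    rw [bernoulli_var P (o d) (p d) (ehat d) ((e d - ehat d) / phat d) (ho01 d)
      (homeas d) (hoE d)]
    have hne : phat d ≠ 0 := (hphat d).1.ne'
    field_simp
    ring
  have hfun : (fun ω => (1 / (Fintype.card ι : ℝ)) *
        ∑ d, (ehat d + o d ω * (e d - ehat d) / phat d))
      = fun ω => (1 / (Fintype.card ι : ℝ)) * (∑ d, X d) ω := by
    funext ω
    simp only [Finset.sum_apply, hX]
    congr 1
    exact Finset.sum_congr rfl fun d _ => by ring
  rw [hfun]
  rw [variance_const_mul]
  rw [IndepFun.variance_sum (fun i _ => hXmem i)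
    (fun i _ j _ hij => hXindep i j hij)]
  rw [Finset.sum_congr rfl fun d _ => hvar d]
  ring
end

section
/- (Double robustness.) If for every d ∈ D either ê_d = e_d or p̂_d = p_d, then the doubly robust loss is unbiased: E[L_DR] = L_ideal. -/
open MeasureTheory ProbabilityTheory Finset Real

/-- Double robustness: If for every `d ∈ D` either `ê_d = e_d` or
`p̂_d = p_d`, then the doubly robust loss is unbiased: `E[L_DR] = L_ideal`. -/
theorem double_robustness
    {Ω : Type*} [MeasurableSpace Ω] (P : Measure Ω) [IsProbabilityMeasure P]
    {ι : Type*} [Fintype ι] [Nonempty ι]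
    (p phat e ehat : ι → ℝ) (o : ι → Ω → ℝ)
    (hp : ∀ d, p d ∈ Set.Icc (0 : ℝ) 1)
    (hphat : ∀ d, phat d ∈ Set.Ioc (0 : ℝ) 1)
    (ho01 : ∀ d ω, o d ω = 0 ∨ o d ω = 1)
    (homeas : ∀ d, Measurable (o d))
    (hoE : ∀ d, ∫ ω, o d ω ∂P = p d)
    (hdr : ∀ d, ehat d = e d ∨ phat d = p d) :
    ∫ ω, (1 / (Fintype.card ι : ℝ)) *
        ∑ d, (ehat d + o d ω * (e d - ehat d) / phat d) ∂P
      = (1 / (Fintype.card ι : ℝ)) * ∑ d, e d := by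
  have hoInt : ∀ d, Integrable (o d) P := by
    intro d
    refine (integrable_const (1 : ℝ)).mono' (homeas d).aestronglyMeasurable ?_
    filter_upwards with ω
    rcases ho01 d ω with h | h <;> simp [h]
  have hint : ∀ d, Integrable (fun ω => ehat d + o d ω * (e d - ehat d) / phat d) P := by
    intro d
    exact (integrable_const _).add (((hoInt d).mul_const _).div_const _)
  have hterm : ∀ d, ∫ ω, (ehat d + o d ω * (e d - ehat d) / phat d) ∂P = e d := by
    intro d
    have : ∫ ω, (ehat d + o d ω * (e d - ehat d) / phat d) ∂P
        = ehat d + (∫ ω, o d ω ∂P) * (e d - ehat d) / phat d := by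
      rw [integral_add (integrable_const _) (((hoInt d).mul_const _).div_const _)]
      simp [integral_div, integral_mul_const]
    rw [this, hoE d]
    rcases hdr d with h | h
    · simp [h]
    · have hne : phat d ≠ 0 := ne_of_gt (hphat d).1
      rw [h] at hne ⊢
      field_simp
      ring
  calc ∫ ω, (1 / (Fintype.card ι : ℝ)) *
        ∑ d, (ehat d + o d ω * (e d - ehat d) / phat d) ∂P
      = (1 / (Fintype.card ι : ℝ)) *
        ∫ ω, ∑ d, (ehat d + o d ω * (e d - ehat d) / phat d) ∂P := integral_const_mul _ _
    _ = (1 / (Fintype.card ι : ℝ)) * ∑ d, e d := by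
        rw [integral_finset_sum _ (fun d _ => hint d)]
        simp_rw [hterm]
end

section
/- (Bias bound used in the proof of Lemma 2.) The bias of the doubly robust loss is bounded as |E[L_DR] − L_ideal| ≤ (1/|D|) Σ_{d∈D} ( |p_d − p̂_d| / p̂_d ) · |e_d − ê_d|. -/
open MeasureTheory ProbabilityTheory Finset Real

/-- Bias bound used in the proof of Lemma 2: The bias of the doubly
robust loss is bounded as
`|E[L_DR] − L_ideal| ≤ (1/|D|) Σ_{d∈D} ( |p_d − p̂_d| / p̂_d ) · |e_d − ê_d|`. -/
theorem bias_bound_DR_loss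
    {Ω : Type*} [MeasurableSpace Ω] (P : Measure Ω) [IsProbabilityMeasure P]
    {ι : Type*} [Fintype ι] [Nonempty ι]
    (p phat e ehat : ι → ℝ) (o : ι → Ω → ℝ)
    (hp : ∀ d, p d ∈ Set.Icc (0 : ℝ) 1)
    (hphat : ∀ d, phat d ∈ Set.Ioc (0 : ℝ) 1)
    (ho01 : ∀ d ω, o d ω = 0 ∨ o d ω = 1)
    (homeas : ∀ d, Measurable (o d))
    (hoE : ∀ d, ∫ ω, o d ω ∂P = p d) :
    |(∫ ω, (1 / (Fintype.card ι : ℝ)) *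
          ∑ d, (ehat d + o d ω * (e d - ehat d) / phat d) ∂P)
        - (1 / (Fintype.card ι : ℝ)) * ∑ d, e d|
      ≤ (1 / (Fintype.card ι : ℝ)) *
        ∑ d, (|p d - phat d| / phat d) * |e d - ehat d| := by
  have hoint : ∀ d, Integrable (o d) P := by
    intro d
    apply Integrable.mono' (integrable_const (1:ℝ)) (homeas d).aestronglyMeasurable
    filter_upwards with ω
    rcases ho01 d ω with h | h <;> simp [h]
  have hterm : ∀ d, Integrable (fun ω => ehat d + o d ω * (e d - ehat d) / phat d) P := by
    intro d
    apply Integrable.add (integrable_const _)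
    simpa [div_eq_mul_inv, mul_assoc] using ((hoint d).mul_const ((e d - ehat d) / phat d))
  have hInt : (∫ ω, (1 / (Fintype.card ι : ℝ)) *
          ∑ d, (ehat d + o d ω * (e d - ehat d) / phat d) ∂P)
      = (1 / (Fintype.card ι : ℝ)) * ∑ d, (ehat d + p d * (e d - ehat d) / phat d) := by
    rw [integral_const_mul, integral_finset_sum _ (fun d _ => hterm d)]
    congr 1
    refine Finset.sum_congr rfl fun d _ => ?_
    rw [integral_add (integrable_const _)]
    · simp only [integral_const, measure_univ, probReal_univ, ENNReal.toReal_one, smul_eq_mul, one_mul]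
      congr 1
      rw [show (fun ω => o d ω * (e d - ehat d) / phat d)
          = fun ω => o d ω * ((e d - ehat d) / phat d) by ext ω; ring]
      rw [integral_mul_const, hoE d]
      ring
    · simpa [div_eq_mul_inv, mul_assoc] using ((hoint d).mul_const ((e d - ehat d) / phat d))
  rw [hInt, ← mul_sub, ← Finset.sum_sub_distrib, abs_mul]
  have hn : |(1 / (Fintype.card ι : ℝ))| = 1 / (Fintype.card ι : ℝ) := by
    rw [abs_of_nonneg]; positivity
  rw [hn]
  gcongr
  refine (Finset.abs_sum_le_sum_abs _ _).trans ?_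
  refine Finset.sum_le_sum fun d _ => ?_
  have hph := (hphat d).1
  have : ehat d + p d * (e d - ehat d) / phat d - e d
      = ((p d - phat d) * (e d - ehat d)) / phat d := by
    field_simp; ring
  rw [this, abs_div, abs_mul, abs_of_pos hph]
  exact le_of_eq (by ring)
end

section
/- (Variance identity underlying MRDR.) If the family (o_d)_{d∈D} is independent, then Var[L_DR] = (1/|D|²) Σ_{d∈D} E[ o_d (1 − p_d) (ê_d − e_d)² / p̂_d² ]. -/
open MeasureTheory ProbabilityTheory Finset Real

lemma variance_const_add' {Ω : Type*} [MeasurableSpace Ω] (P : Measure Ω)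
    [IsProbabilityMeasure P] (a : ℝ) (X : Ω → ℝ) (hX : MemLp X 2 P) :
    variance (fun ω => a + X ω) P = variance X P := by
  exact variance_const_add hX.aestronglyMeasurable a

/-- Variance identity underlying MRDR: If the family `(o_d)_{d∈D}`
is independent, then
`Var[L_DR] = (1/|D|²) Σ_{d∈D} E[ o_d (1 − p_d) (ê_d − e_d)² / p̂_d² ]`. -/
theorem variance_DR_loss_MRDR_form
    {Ω : Type*} [MeasurableSpace Ω] (P : Measure Ω) [IsProbabilityMeasure P]
    {ι : Type*} [Fintype ι] [Nonempty ι]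
    (p phat e ehat : ι → ℝ) (o : ι → Ω → ℝ)
    (hp : ∀ d, p d ∈ Set.Icc (0 : ℝ) 1)
    (hphat : ∀ d, phat d ∈ Set.Ioc (0 : ℝ) 1)
    (ho01 : ∀ d ω, o d ω = 0 ∨ o d ω = 1)
    (homeas : ∀ d, Measurable (o d))
    (hoE : ∀ d, ∫ ω, o d ω ∂P = p d)
    (hindep : iIndepFun o P) :
    variance
        (fun ω => (1 / (Fintype.card ι : ℝ)) *
          ∑ d, (ehat d + o d ω * (e d - ehat d) / phat d)) P
      = (1 / (Fintype.card ι : ℝ) ^ 2) *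
        ∑ d, ∫ ω, o d ω * (1 - p d) * (ehat d - e d) ^ 2 / (phat d) ^ 2 ∂P := by
  classical
  set n : ℝ := (Fintype.card ι : ℝ) with hn
  have hn0 : n ≠ 0 := by
    simp [hn, Fintype.card_ne_zero]
  set c : ι → ℝ := fun d => (e d - ehat d) / phat d with hc
  set Y : ι → Ω → ℝ := fun d ω => (c d / n) * o d ω with hY
  have hoMem : ∀ d, MemLp (o d) 2 P := by
    intro d
    refine memLp_of_bounded (a := 0) (b := 1) ?_ (homeas d).aestronglyMeasurable 2
    filter_upwards with ω
    rcases ho01 d ω with h | h <;> simp [h]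
  have hYMem : ∀ d, MemLp (Y d) 2 P := fun d => (hoMem d).const_mul _
  -- rewrite the function
  have hfun : (fun ω => (1 / n) *
          ∑ d, (ehat d + o d ω * (e d - ehat d) / phat d))
      = fun ω => ((1 / n) * ∑ d, ehat d) + (∑ d, Y d) ω := by
    funext ω
    simp only [Finset.sum_apply, hY, hc]
    rw [Finset.sum_add_distrib, mul_add]
    congr 1
    rw [Finset.mul_sum]
    apply Finset.sum_congr rfl
    intro d _
    ring
  rw [hfun, variance_const_add' P _ _ (memLp_finsetSum' _ fun d _ => hYMem d)]
  have hpair : Set.Pairwise ↑(Finset.univ : Finset ι)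
      fun i j => IndepFun (Y i) (Y j) P := by
    intro i _ j _ hij
    exact ((hindep.indepFun hij).comp
      (measurable_const_mul (c i / n)) (measurable_const_mul (c j / n)))
  rw [IndepFun.variance_sum (fun d _ => hYMem d) hpair]
  -- compute each term
  rw [Finset.mul_sum]
  apply Finset.sum_congr rfl
  intro d _
  have hvo : variance (o d) P = p d - p d ^ 2 := by
    rw [variance_eq_sub (hoMem d)]
    have hsq : (fun ω => o d ω ^ 2) = o d := by
      funext ω; rcases ho01 d ω with h | h <;> simp [h]
    simp only [Pi.pow_apply]
    rw [hsq, hoE d]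
  have hvy : variance (Y d) P = (c d / n) ^ 2 * (p d - p d ^ 2) := by
    rw [hY]
    rw [variance_const_mul (c d / n) (o d) P, hvo]
  -- RHS integral
  have hrhs : ∫ ω, o d ω * (1 - p d) * (ehat d - e d) ^ 2 / (phat d) ^ 2 ∂P
      = p d * ((1 - p d) * (ehat d - e d) ^ 2 / (phat d) ^ 2) := by
    have : (fun ω => o d ω * (1 - p d) * (ehat d - e d) ^ 2 / (phat d) ^ 2)
        = fun ω => o d ω * ((1 - p d) * (ehat d - e d) ^ 2 / (phat d) ^ 2) := by
      funext ω; ring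
    rw [this, integral_mul_const, hoE d]
  rw [hvy, hrhs]
  have hph : phat d ≠ 0 := ne_of_gt (hphat d).1
  simp only [hc]
  field_simp
  ring
end

section
/- (Hoeffding concentration of the DR loss.) Assume the family (o_d)_{d∈D} is independent and Σ_{d∈D} ((e_d − ê_d)/p̂_d)² > 0. Then for every ε > 0, P( |L_DR − E[L_DR]| > ε ) ≤ 2 · exp( −2 ε² |D|² / Σ_{d∈D} ((e_d − ê_d)/p̂_d)² ). -/
open MeasureTheory ProbabilityTheory Finset Real

lemma hoeff_scalar {q : ℝ} (h0 : 0 ≤ q) (h1 : q ≤ 1) (s : ℝ) :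
    (1 - q) * exp (-(s * q)) + q * exp (s * (1 - q)) ≤ exp (s ^ 2 / 8) := by
  set D : ℝ → ℝ := fun x => 1 - q + q * exp x with hDdef
  have hD : ∀ x, 0 < D x := by
    intro x
    show 0 < 1 - q + q * exp x
    rcases le_or_gt 1 (exp x) with hx | hx
    · nlinarith [mul_nonneg h0 (sub_nonneg.2 hx)]
    · nlinarith [mul_nonneg (sub_nonneg.2 h1) (sub_nonneg.2 hx.le), exp_pos x]
  set g : ℝ → ℝ := fun x => q * x + x ^ 2 / 8 - log (D x) with hgdef
  set h : ℝ → ℝ := fun x => q + x / 4 - q * exp x / D x with hhdef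
  have hDd : ∀ x, HasDerivAt D (q * exp x) x := fun x =>
    (((hasDerivAt_exp x).const_mul q)).const_add (1 - q)
  have hgd : ∀ x, HasDerivAt g (h x) x := by
    intro x
    have h1' : HasDerivAt (fun x : ℝ => q * x) q x := by
      simpa using (hasDerivAt_id x).const_mul q
    have h2' : HasDerivAt (fun x : ℝ => x ^ 2 / 8) (x / 4) x := by
      have := (hasDerivAt_pow 2 x).div_const 8
      exact this.congr_deriv (by norm_num; ring)
    have h3' : HasDerivAt (fun x => log (D x)) (q * exp x / D x) x :=
      (hDd x).log (hD x).ne'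
    exact (h1'.add h2').sub h3'
  have hhd : ∀ x, HasDerivAt h
      (1 / 4 - (q * exp x * D x - q * exp x * (q * exp x)) / (D x) ^ 2) x := by
    intro x
    have h2' : HasDerivAt (fun x : ℝ => q + x / 4) (1 / 4) x := by
      simpa using ((hasDerivAt_id x).div_const 4).const_add q
    have h3' : HasDerivAt (fun x => q * exp x / D x)
        ((q * exp x * D x - q * exp x * (q * exp x)) / (D x) ^ 2) x :=
      ((hasDerivAt_exp x).const_mul q).div (hDd x) (hD x).ne'
    exact h2'.sub h3'
  have hderiv_nonneg : ∀ x, 0 ≤ deriv h x := by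
    intro x
    rw [(hhd x).deriv]
    have hDx := hD x
    have hE := exp_pos x
    rw [sub_nonneg, div_le_iff₀ (by positivity)]
    have : q * exp x * D x - q * exp x * (q * exp x) = (q * exp x) * (1 - q) := by
      simp only [hDdef]; ring
    rw [this]
    nlinarith [sq_nonneg ((1 - q) - q * exp x), mul_nonneg (mul_nonneg h0 hE.le) (sub_nonneg.2 h1)]
  have hmono : Monotone h := monotone_of_deriv_nonneg (fun x => (hhd x).differentiableAt)
    hderiv_nonneg
  have hh0 : h 0 = 0 := by simp [hhdef, hDdef]
  have hg0 : g 0 = 0 := by simp [hgdef, hDdef]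
  have hgnonneg : ∀ x, 0 ≤ g x := by
    intro x
    rcases le_total 0 x with hx | hx
    · have : MonotoneOn g (Set.Ici 0) := by
        refine monotoneOn_of_deriv_nonneg (convex_Ici 0)
          (fun y _ => ((hgd y).differentiableAt).continuousAt.continuousWithinAt)
          (fun y _ => ((hgd y).differentiableAt).differentiableWithinAt) ?_
        intro y hy
        rw [(hgd y).deriv]
        rw [interior_Ici] at hy
        have := hmono (le_of_lt hy)
        rw [hh0] at this
        exact this
      have := this (Set.self_mem_Ici) (Set.mem_Ici.2 hx) hx
      rwa [hg0] at this
    · have : AntitoneOn g (Set.Iic 0) := by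
        refine antitoneOn_of_deriv_nonpos (convex_Iic 0)
          (fun y _ => ((hgd y).differentiableAt).continuousAt.continuousWithinAt)
          (fun y _ => ((hgd y).differentiableAt).differentiableWithinAt) ?_
        intro y hy
        rw [(hgd y).deriv]
        rw [interior_Iic] at hy
        have := hmono (le_of_lt hy)
        rw [hh0] at this
        exact this
      have := this (Set.mem_Iic.2 hx) (Set.self_mem_Iic) hx
      rwa [hg0] at this
  have hlog : log (D s) ≤ q * s + s ^ 2 / 8 := by
    have := hgnonneg s
    simp only [hgdef] at this
    linarith
  have hDle : D s ≤ exp (q * s + s ^ 2 / 8) := by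
    rw [← Real.exp_log (hD s)]
    exact exp_le_exp.2 hlog
  calc (1 - q) * exp (-(s * q)) + q * exp (s * (1 - q))
      = exp (-(s * q)) * D s := by
        have he : exp (s * (1 - q)) = exp (-(s * q)) * exp s := by
          rw [← Real.exp_add]; ring_nf
        simp only [hDdef]
        rw [he]; ring
    _ ≤ exp (-(s * q)) * exp (q * s + s ^ 2 / 8) := by
        exact mul_le_mul_of_nonneg_left hDle (exp_pos _).le
    _ = exp (s ^ 2 / 8) := by rw [← Real.exp_add]; ring_nf

/-- Hoeffding concentration of the DR loss: Assume the family
`(o_d)_{d∈D}` is independent and `Σ_{d∈D} ((e_d − ê_d)/p̂_d)² > 0`. Then for every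
`ε > 0`,
`P( |L_DR − E[L_DR]| > ε ) ≤ 2 · exp( −2 ε² |D|² / Σ_{d∈D} ((e_d − ê_d)/p̂_d)² )`. -/
theorem hoeffding_DR_loss
    {Ω : Type*} [MeasurableSpace Ω] (P : Measure Ω) [IsProbabilityMeasure P]
    {ι : Type*} [Fintype ι] [Nonempty ι]
    (p phat e ehat : ι → ℝ) (o : ι → Ω → ℝ)
    (hp : ∀ d, p d ∈ Set.Icc (0 : ℝ) 1)
    (hphat : ∀ d, phat d ∈ Set.Ioc (0 : ℝ) 1)
    (ho01 : ∀ d ω, o d ω = 0 ∨ o d ω = 1)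
    (homeas : ∀ d, Measurable (o d))
    (hoE : ∀ d, ∫ ω, o d ω ∂P = p d)
    (hindep : iIndepFun o P)
    (hpos : 0 < ∑ d, ((e d - ehat d) / phat d) ^ 2)
    (ε : ℝ) (hε : 0 < ε) :
    P {ω | |(1 / (Fintype.card ι : ℝ)) *
              (∑ d, (ehat d + o d ω * (e d - ehat d) / phat d))
            - ∫ ω', (1 / (Fintype.card ι : ℝ)) *
              (∑ d, (ehat d + o d ω' * (e d - ehat d) / phat d)) ∂P| > ε}
      ≤ ENNReal.ofReal
          (2 * Real.exp (-2 * ε ^ 2 * (Fintype.card ι : ℝ) ^ 2 /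
            ∑ d, ((e d - ehat d) / phat d) ^ 2)) := by
  classical
  set n : ℝ := (Fintype.card ι : ℝ) with hn_def
  have hn : 0 < n := by
    simp only [hn_def]
    exact_mod_cast Fintype.card_pos
  set c : ι → ℝ := fun d => (e d - ehat d) / phat d with hc_def
  set K : ℝ := ∑ d, c d ^ 2 with hK_def
  have hK : 0 < K := hpos
  -- centered variables
  set Y : ι → Ω → ℝ := fun d ω => c d * (o d ω - p d) with hY_def
  have hYmeas : ∀ d, Measurable (Y d) := fun d =>
    ((homeas d).sub_const (p d)).const_mul (c d)
  have hYindep : iIndepFun Y P :=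
    hindep.comp (fun d x => c d * (x - p d))
      (fun d => (measurable_id.sub_const (p d)).const_mul (c d))
  have ho_int : ∀ d, Integrable (o d) P := by
    intro d
    refine (integrable_const (1 : ℝ)).mono' (homeas d).aestronglyMeasurable ?_
    exact ae_of_all _ fun ω => by rcases ho01 d ω with h | h <;> simp [h]
  -- integrability of exp(t * Y d)
  have hYabs : ∀ d ω, |Y d ω| ≤ |c d| := by
    intro d ω
    have h1 := (hp d).1
    have h2 := (hp d).2
    have hop : |o d ω - p d| ≤ 1 := by
      rcases ho01 d ω with h | h <;> rw [h, abs_le] <;> constructor <;> linarith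
    calc |Y d ω| = |c d| * |o d ω - p d| := by rw [hY_def]; exact abs_mul _ _
      _ ≤ |c d| * 1 := mul_le_mul_of_nonneg_left hop (abs_nonneg _)
      _ = |c d| := mul_one _
  have hInt : ∀ d t, Integrable (fun ω => exp (t * Y d ω)) P := by
    intro d t
    refine (integrable_const (exp (|t| * |c d|))).mono'
      (((hYmeas d).const_mul t).exp).aestronglyMeasurable ?_
    refine ae_of_all _ fun ω => ?_
    rw [Real.norm_eq_abs, Real.abs_exp]
    refine exp_le_exp.2 ?_
    calc t * Y d ω ≤ |t * Y d ω| := le_abs_self _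
      _ = |t| * |Y d ω| := abs_mul _ _
      _ ≤ |t| * |c d| := mul_le_mul_of_nonneg_left (hYabs d ω) (abs_nonneg _)
  -- the mgf bound for each Y d
  have hmgf : ∀ d t, mgf (Y d) P t ≤ exp (t ^ 2 * c d ^ 2 / 8) := by
    intro d t
    have h1 := (hp d).1
    have h2 := (hp d).2
    set s : ℝ := t * c d with hs_def
    have hpt : ∀ ω, exp (t * Y d ω) =
        exp (-(s * p d)) + o d ω * (exp (s * (1 - p d)) - exp (-(s * p d))) := by
      intro ω
      rcases ho01 d ω with h | h
      · rw [hY_def]; simp only [h, zero_mul, add_zero, zero_sub]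
        congr 1; rw [hs_def]; ring
      · rw [hY_def]; simp only [h, one_mul]
        have : t * (c d * (1 - p d)) = s * (1 - p d) := by rw [hs_def]; ring
        rw [this]; ring
    have hint2 : Integrable (fun ω => o d ω * (exp (s * (1 - p d)) - exp (-(s * p d)))) P :=
      (ho_int d).mul_const _
    have hval : mgf (Y d) P t
        = (1 - p d) * exp (-(s * p d)) + p d * exp (s * (1 - p d)) := by
      rw [mgf]
      calc ∫ ω, exp (t * Y d ω) ∂P
          = ∫ ω, (exp (-(s * p d)) + o d ω * (exp (s * (1 - p d)) - exp (-(s * p d)))) ∂P := by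
            exact integral_congr_ae (ae_of_all _ hpt)
        _ = exp (-(s * p d)) + (∫ ω, o d ω ∂P) * (exp (s * (1 - p d)) - exp (-(s * p d))) := by
            rw [integral_add (integrable_const _) hint2, integral_const,
              integral_mul_const]
            simp
        _ = (1 - p d) * exp (-(s * p d)) + p d * exp (s * (1 - p d)) := by
            rw [hoE d]; ring
    rw [hval]
    have := hoeff_scalar h1 h2 s
    have hexp : s ^ 2 / 8 = t ^ 2 * c d ^ 2 / 8 := by rw [hs_def]; ring
    rwa [hexp] at this
  -- mgf of the sum
  have hmgf_sum : ∀ t, mgf (∑ d, Y d) P t ≤ exp (t ^ 2 * K / 8) := by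
    intro t
    rw [hYindep.mgf_sum hYmeas univ]
    calc ∏ d, mgf (Y d) P t ≤ ∏ d, exp (t ^ 2 * c d ^ 2 / 8) :=
          Finset.prod_le_prod (fun d _ => mgf_nonneg) (fun d _ => hmgf d t)
      _ = exp (∑ d, t ^ 2 * c d ^ 2 / 8) := by rw [Real.exp_sum]
      _ = exp (t ^ 2 * K / 8) := by
          congr 1
          rw [hK_def, Finset.mul_sum, Finset.sum_div]
  have hSumInt : ∀ t, Integrable (fun ω => exp (t * (∑ d, Y d) ω)) P := fun t =>
    hYindep.integrable_exp_mul_sum hYmeas (fun d _ => hInt d t)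
  -- the optimal t
  set t₀ : ℝ := 4 * n * ε / K with ht₀_def
  have ht₀ : 0 < t₀ := by positivity
  have hexp_eq : -t₀ * (n * ε) + t₀ ^ 2 * K / 8 = -2 * ε ^ 2 * n ^ 2 / K := by
    rw [ht₀_def]; field_simp; ring
  -- tail bounds
  have htail_up : (P {ω | n * ε ≤ (∑ d, Y d) ω}).toReal ≤ exp (-2 * ε ^ 2 * n ^ 2 / K) := by
    calc (P {ω | n * ε ≤ (∑ d, Y d) ω}).toReal
        ≤ exp (-t₀ * (n * ε)) * mgf (∑ d, Y d) P t₀ :=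
          measure_ge_le_exp_mul_mgf (n * ε) ht₀.le (hSumInt t₀)
      _ ≤ exp (-t₀ * (n * ε)) * exp (t₀ ^ 2 * K / 8) :=
          mul_le_mul_of_nonneg_left (hmgf_sum t₀) (exp_pos _).le
      _ = exp (-2 * ε ^ 2 * n ^ 2 / K) := by rw [← Real.exp_add, hexp_eq]
  have htail_lo : (P {ω | (∑ d, Y d) ω ≤ -(n * ε)}).toReal ≤ exp (-2 * ε ^ 2 * n ^ 2 / K) := by
    calc (P {ω | (∑ d, Y d) ω ≤ -(n * ε)}).toReal
        ≤ exp (-(-t₀) * (-(n * ε))) * mgf (∑ d, Y d) P (-t₀) :=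
          measure_le_le_exp_mul_mgf (-(n * ε)) (neg_nonpos.2 ht₀.le) (hSumInt (-t₀))
      _ ≤ exp (-t₀ * (n * ε)) * exp ((-t₀) ^ 2 * K / 8) := by
          rw [show -(-t₀) * (-(n * ε)) = -t₀ * (n * ε) by ring]
          exact mul_le_mul_of_nonneg_left (hmgf_sum (-t₀)) (exp_pos _).le
      _ = exp (-2 * ε ^ 2 * n ^ 2 / K) := by
          rw [← Real.exp_add, show (-t₀) ^ 2 * K / 8 = t₀ ^ 2 * K / 8 by ring, hexp_eq]
  -- compute the mean
  have hX_int : ∀ d, Integrable (fun ω => ehat d + o d ω * (e d - ehat d) / phat d) P :=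
    fun d => (integrable_const _).add (((ho_int d).mul_const _).div_const _)
  have hmean : (∫ ω', (1 / n) * (∑ d, (ehat d + o d ω' * (e d - ehat d) / phat d)) ∂P)
      = (1 / n) * ∑ d, (ehat d + p d * (e d - ehat d) / phat d) := by
    rw [integral_const_mul, integral_finset_sum _ (fun d _ => hX_int d)]
    congr 1
    refine Finset.sum_congr rfl fun d _ => ?_
    rw [integral_add (integrable_const _) (((ho_int d).mul_const _).div_const _),
      integral_const, integral_div, integral_mul_const, hoE d]
    simp
  -- inclusion of events
  have hincl : {ω | |(1 / n) * (∑ d, (ehat d + o d ω * (e d - ehat d) / phat d))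
            - ∫ ω', (1 / n) * (∑ d, (ehat d + o d ω' * (e d - ehat d) / phat d)) ∂P| > ε}
      ⊆ {ω | n * ε ≤ (∑ d, Y d) ω} ∪ {ω | (∑ d, Y d) ω ≤ -(n * ε)} := by
    intro ω hω
    simp only [Set.mem_setOf_eq, gt_iff_lt] at hω
    rw [hmean] at hω
    have hdiff : (1 / n) * (∑ d, (ehat d + o d ω * (e d - ehat d) / phat d))
        - (1 / n) * ∑ d, (ehat d + p d * (e d - ehat d) / phat d)
        = (1 / n) * (∑ d, Y d) ω := by
      rw [Finset.sum_apply, ← mul_sub, ← Finset.sum_sub_distrib]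
      congr 1
      refine Finset.sum_congr rfl fun d _ => ?_
      rw [hY_def, hc_def]; ring
    rw [hdiff] at hω
    have habs : n * ε < |(∑ d, Y d) ω| := by
      have : |(1 / n) * (∑ d, Y d) ω| = (1 / n) * |(∑ d, Y d) ω| := by
        rw [abs_mul, abs_of_pos (by positivity : (0:ℝ) < 1 / n)]
      rw [this] at hω
      calc n * ε < n * ((1 / n) * |(∑ d, Y d) ω|) := by
            exact (mul_lt_mul_iff_right₀ hn).2 hω
        _ = |(∑ d, Y d) ω| := by field_simp
    rcases lt_abs.1 habs with h | h
    · exact Or.inl (le_of_lt h)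
    · exact Or.inr (show (∑ d, Y d) ω ≤ -(n * ε) by linarith)
  -- assemble
  set r : ℝ := exp (-2 * ε ^ 2 * n ^ 2 / K) with hr_def
  have hfin : ∀ (s : Set Ω), P s ≠ ⊤ := fun s => measure_ne_top P s
  have hA : P {ω | n * ε ≤ (∑ d, Y d) ω} ≤ ENNReal.ofReal r := by
    rw [← ENNReal.ofReal_toReal (hfin _)]
    exact ENNReal.ofReal_le_ofReal htail_up
  have hB : P {ω | (∑ d, Y d) ω ≤ -(n * ε)} ≤ ENNReal.ofReal r := by
    rw [← ENNReal.ofReal_toReal (hfin _)]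
    exact ENNReal.ofReal_le_ofReal htail_lo
  calc P {ω | |(1 / n) * (∑ d, (ehat d + o d ω * (e d - ehat d) / phat d))
            - ∫ ω', (1 / n) * (∑ d, (ehat d + o d ω' * (e d - ehat d) / phat d)) ∂P| > ε}
      ≤ P ({ω | n * ε ≤ (∑ d, Y d) ω} ∪ {ω | (∑ d, Y d) ω ≤ -(n * ε)}) := measure_mono hincl
    _ ≤ P {ω | n * ε ≤ (∑ d, Y d) ω} + P {ω | (∑ d, Y d) ω ≤ -(n * ε)} := measure_union_le _ _
    _ ≤ ENNReal.ofReal r + ENNReal.ofReal r := add_le_add hA hB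
    _ = ENNReal.ofReal (2 * r) := by
        rw [← ENNReal.ofReal_add (exp_pos _).le (exp_pos _).le, two_mul]
    _ = ENNReal.ofReal (2 * Real.exp (-2 * ε ^ 2 * n ^ 2 / K)) := rfl
end

section
/- (Uniform concentration over a finite hypothesis class.) Let H be a finite nonempty set and for each h ∈ H let e^h : D → ℝ be the prediction errors of hypothesis h, with doubly robust loss L_DR^h = (1/|D|) Σ_{d∈D} ( ê_d + o_d (e^h_d − ê_d)/p̂_d ). Assume the family (o_d)_{d∈D} is independent, let M = max_{h∈H} Σ_{d∈D} ((e^h_d − ê_d)/p̂_d)², and assume M > 0. Then for every η ∈ (0,1), with probability at least 1 − η, for all h ∈ H simultaneously, |L_DR^h − E[L_DR^h]| ≤ sqrt( log(2|H|/η) · M / (2|D|²) ). -/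
open MeasureTheory ProbabilityTheory Finset Real


lemma hoeff_core (a : ℝ) (ha0 : 0 ≤ a) (ha1 : a ≤ 1) (s : ℝ) :
    (1 - a) + a * Real.exp s ≤ Real.exp (s * a + s ^ 2 / 8) := by
  rcases eq_or_lt_of_le ha0 with h0 | h0
  · simp only [← h0, sub_zero, zero_mul, add_zero]
    have : (0:ℝ) ≤ s * 0 + s ^ 2 / 8 := by nlinarith [sq_nonneg s]
    simpa using Real.one_le_exp this
  rcases eq_or_lt_of_le ha1 with h1 | h1
  · subst h1
    simp only [sub_self, zero_add, one_mul]
    rw [show s * 1 + s ^ 2 / 8 = s + s ^ 2 / 8 by ring, Real.exp_add]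
    nlinarith [Real.exp_pos s, Real.one_le_exp (by positivity : (0:ℝ) ≤ s^2/8)]
  -- main case 0 < a < 1
  have hu : ∀ x : ℝ, 0 < (1 - a) + a * Real.exp x := fun x => by
    have := Real.exp_pos x; nlinarith
  set F : ℝ → ℝ := fun x => x * a + x ^ 2 / 8 - Real.log ((1 - a) + a * Real.exp x) with hFdef
  set F1 : ℝ → ℝ := fun x => a + x / 4 - a * Real.exp x / ((1 - a) + a * Real.exp x) with hF1def
  have hF : ∀ x, HasDerivAt F (F1 x) x := by
    intro x
    have h1 : HasDerivAt (fun y => (1 - a) + a * Real.exp y) (a * Real.exp x) x :=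
      ((Real.hasDerivAt_exp x).const_mul a).const_add (1 - a)
    have h2 := h1.log (hu x).ne'
    have h3 : HasDerivAt (fun y : ℝ => y * a + y ^ 2 / 8) (a + x / 4) x := by
      have := ((hasDerivAt_id x).mul_const a).add ((hasDerivAt_pow 2 x).div_const 8)
      exact this.congr_deriv (by norm_num; ring)
    exact h3.sub h2
  have hF1 : ∀ x, HasDerivAt F1
      (1 / 4 - a * Real.exp x * (1 - a) / ((1 - a) + a * Real.exp x) ^ 2) x := by
    intro x
    have h1 : HasDerivAt (fun y => (1 - a) + a * Real.exp y) (a * Real.exp x) x :=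
      ((Real.hasDerivAt_exp x).const_mul a).const_add (1 - a)
    have h4 : HasDerivAt (fun y => a * Real.exp y) (a * Real.exp x) x :=
      (Real.hasDerivAt_exp x).const_mul a
    have hdiv := h4.div h1 (hu x).ne'
    have h5 : HasDerivAt (fun y : ℝ => a + y / 4) ((1:ℝ) / 4) x := by
      simpa using ((hasDerivAt_id x).div_const 4).const_add a
    have := h5.sub hdiv
    refine this.congr_deriv ?_
    have hx := (hu x).ne'
    field_simp
    ring
  have hd2 : ∀ x, 0 ≤ 1 / 4 - a * Real.exp x * (1 - a) / ((1 - a) + a * Real.exp x) ^ 2 := by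
    intro x
    rw [sub_nonneg, div_le_iff₀ (pow_pos (hu x) 2)]
    nlinarith [sq_nonneg ((1 - a) - a * Real.exp x), Real.exp_pos x]
  have hmono : Monotone F1 :=
    monotone_of_deriv_nonneg (fun x => (hF1 x).differentiableAt)
      (fun x => by rw [(hF1 x).deriv]; exact hd2 x)
  have hF10 : F1 0 = 0 := by
    simp only [hF1def, Real.exp_zero, mul_one]
    field_simp
    ring
  have hF0 : F 0 = 0 := by
    simp [hFdef]
  have hFnonneg : ∀ x, 0 ≤ F x := by
    intro x
    rcases le_total 0 x with hx | hx
    · have hm : MonotoneOn F (Set.Ici 0) := by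
        apply monotoneOn_of_deriv_nonneg (convex_Ici 0)
          (fun y _ => ((hF y).differentiableAt).continuousAt.continuousWithinAt)
          (fun y _ => ((hF y).differentiableAt).differentiableWithinAt)
        intro y hy
        rw [(hF y).deriv]
        rw [interior_Ici] at hy
        have := hmono (le_of_lt hy)
        rwa [hF10] at this
      have := hm (Set.self_mem_Ici) hx hx
      rwa [hF0] at this
    · have hm : AntitoneOn F (Set.Iic 0) := by
        apply antitoneOn_of_deriv_nonpos (convex_Iic 0)
          (fun y _ => ((hF y).differentiableAt).continuousAt.continuousWithinAt)
          (fun y _ => ((hF y).differentiableAt).differentiableWithinAt)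
        intro y hy
        rw [(hF y).deriv]
        rw [interior_Iic] at hy
        have := hmono (le_of_lt hy)
        rwa [hF10] at this
      have := hm hx (Set.self_mem_Iic) hx
      rwa [hF0] at this
  have := hFnonneg s
  have hlog : Real.log ((1 - a) + a * Real.exp s) ≤ s * a + s ^ 2 / 8 := by
    simp only [hFdef] at this; linarith
  calc (1 - a) + a * Real.exp s
      = Real.exp (Real.log ((1 - a) + a * Real.exp s)) := (Real.exp_log (hu s)).symm
    _ ≤ Real.exp (s * a + s ^ 2 / 8) := Real.exp_le_exp.mpr hlog


lemma o_integrable {Ω : Type*} [MeasurableSpace Ω] (P : Measure Ω) [IsProbabilityMeasure P]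
    (X : Ω → ℝ) (hX01 : ∀ ω, X ω = 0 ∨ X ω = 1) (hXm : Measurable X) :
    Integrable X P := by
  refine (integrable_const (1:ℝ)).mono' hXm.aestronglyMeasurable (ae_of_all _ fun ω => ?_)
  rcases hX01 ω with h | h <;> simp [h]

lemma exp_pointwise (s a : ℝ) {Ω : Type*} (X : Ω → ℝ) (hX01 : ∀ ω, X ω = 0 ∨ X ω = 1) :
    ∀ ω, Real.exp (s * (X ω - a)) =
      Real.exp (-(s * a)) * ((1 - X ω) + X ω * Real.exp s) := by
  intro ω
  rcases hX01 ω with h | h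
  · rw [h]; ring_nf
  · rw [h]; norm_num; rw [← Real.exp_add]; ring_nf

lemma exp_integrable {Ω : Type*} [MeasurableSpace Ω] (P : Measure Ω) [IsProbabilityMeasure P]
    (X : Ω → ℝ) (hX01 : ∀ ω, X ω = 0 ∨ X ω = 1) (hXm : Measurable X) (s a : ℝ) :
    Integrable (fun ω => Real.exp (s * (X ω - a))) P := by
  simp only [exp_pointwise s a X hX01]
  exact ((((integrable_const (1:ℝ)).sub (o_integrable P X hX01 hXm)).add
    ((o_integrable P X hX01 hXm).mul_const _)).const_mul _)

lemma mgf_single {Ω : Type*} [MeasurableSpace Ω] (P : Measure Ω) [IsProbabilityMeasure P]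
    (X : Ω → ℝ) (a : ℝ) (ha0 : 0 ≤ a) (ha1 : a ≤ 1)
    (hX01 : ∀ ω, X ω = 0 ∨ X ω = 1) (hXm : Measurable X) (hXE : ∫ ω, X ω ∂P = a)
    (s : ℝ) :
    ∫ ω, Real.exp (s * (X ω - a)) ∂P ≤ Real.exp (s ^ 2 / 8) := by
  have hint := o_integrable P X hX01 hXm
  have heq : ∫ ω, Real.exp (s * (X ω - a)) ∂P =
      Real.exp (-(s * a)) * ((1 - a) + a * Real.exp s) := by
    simp only [exp_pointwise s a X hX01]
    have hsub : Integrable (fun ω => 1 - X ω) P := (integrable_const (1:ℝ)).sub hint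
    have h1 : ∫ ω, (1 - X ω) ∂P = 1 - a := by
      rw [integral_sub (integrable_const (1:ℝ)) hint, hXE, integral_const]
      simp
    have h2 : ∫ ω, (X ω * Real.exp s) ∂P = a * Real.exp s := by
      rw [integral_mul_const, hXE]
    rw [integral_const_mul, integral_add hsub (hint.mul_const _), h1, h2]
  rw [heq]
  calc Real.exp (-(s * a)) * ((1 - a) + a * Real.exp s)
      ≤ Real.exp (-(s * a)) * Real.exp (s * a + s ^ 2 / 8) :=
        mul_le_mul_of_nonneg_left (hoeff_core a ha0 ha1 s) (Real.exp_pos _).le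
    _ = Real.exp (s ^ 2 / 8) := by rw [← Real.exp_add]; ring_nf

lemma hoeff_tail {Ω : Type*} [MeasurableSpace Ω] (P : Measure Ω) [IsProbabilityMeasure P]
    {ι : Type*} [Fintype ι] (o : ι → Ω → ℝ) (p : ι → ℝ)
    (hp0 : ∀ d, 0 ≤ p d) (hp1 : ∀ d, p d ≤ 1)
    (ho01 : ∀ d ω, o d ω = 0 ∨ o d ω = 1) (homeas : ∀ d, Measurable (o d))
    (hoE : ∀ d, ∫ ω, o d ω ∂P = p d)
    (hindep : iIndepFun o P)
    (c : ι → ℝ) (ε : ℝ) (hε : 0 < ε) (hV : 0 < ∑ d, (c d)^2) :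
    (P {ω | ε ≤ ∑ d, c d * (o d ω - p d)}).toReal ≤
      Real.exp (-2 * ε^2 / ∑ d, (c d)^2) := by
  set V := ∑ d, (c d)^2 with hVdef
  set t := 4 * ε / V with htdef
  have ht : 0 < t := by positivity
  set Y : ι → Ω → ℝ := fun d ω => c d * (o d ω - p d) with hYdef
  have hYmeas : ∀ d, Measurable (Y d) := fun d => ((homeas d).sub measurable_const).const_mul _
  have hYindep : iIndepFun Y P :=
    hindep.comp (fun d (x : ℝ) => c d * (x - p d))
      (fun d => (measurable_id.sub measurable_const).const_mul _)
  have hYint : ∀ s : ℝ, ∀ d, Integrable (fun ω => Real.exp (s * Y d ω)) P := by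
    intro s d
    have h := exp_integrable P (o d) (ho01 d) (homeas d) (s * c d) (p d)
    have : (fun ω => Real.exp (s * Y d ω)) =
        (fun ω => Real.exp (s * c d * (o d ω - p d))) := by
      funext ω; simp only [hYdef]; ring_nf
    rw [this]; exact h
  have hmgf_le : ∀ d, mgf (Y d) P t ≤ Real.exp ((t * c d)^2 / 8) := by
    intro d
    have h := mgf_single P (o d) (p d) (hp0 d) (hp1 d) (ho01 d) (homeas d) (hoE d) (t * c d)
    have heq : mgf (Y d) P t = ∫ ω, Real.exp (t * c d * (o d ω - p d)) ∂P := by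
      unfold mgf
      congr 1; funext ω; simp only [hYdef]; ring_nf
    rw [heq]; exact h
  have hS_int : Integrable (fun ω => Real.exp (t * (∑ d, Y d) ω)) P :=
    hYindep.integrable_exp_mul_sum hYmeas (fun d _ => hYint t d)
  have hch := measure_ge_le_exp_mul_mgf (μ := P) (X := ∑ d, Y d) ε ht.le hS_int
  have hset : {ω | ε ≤ ∑ d, c d * (o d ω - p d)} = {ω | ε ≤ (∑ d, Y d) ω} := by
    ext ω; simp [hYdef]
  rw [hset]
  refine hch.trans ?_
  have hmgfsum : mgf (∑ d, Y d) P t = ∏ d, mgf (Y d) P t := hYindep.mgf_sum hYmeas univ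
  have hprod : ∏ d, mgf (Y d) P t ≤ ∏ d, Real.exp ((t * c d)^2 / 8) :=
    Finset.prod_le_prod (fun d _ => mgf_nonneg) (fun d _ => hmgf_le d)
  have hexp : ∏ d, Real.exp ((t * c d)^2 / 8) = Real.exp (t^2 * V / 8) := by
    rw [← Real.exp_sum]
    congr 1
    simp_rw [mul_pow]
    rw [← Finset.sum_div, ← Finset.mul_sum]
  calc Real.exp (-t * ε) * mgf (∑ d, Y d) P t
      ≤ Real.exp (-t * ε) * Real.exp (t^2 * V / 8) := by
        rw [hmgfsum]
        exact mul_le_mul_of_nonneg_left (hprod.trans_eq hexp) (Real.exp_pos _).le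
    _ = Real.exp (-2 * ε^2 / V) := by
        rw [← Real.exp_add]
        congr 1
        rw [htdef]
        field_simp
        ring

lemma hoeff_two {Ω : Type*} [MeasurableSpace Ω] (P : Measure Ω) [IsProbabilityMeasure P]
    {ι : Type*} [Fintype ι] (o : ι → Ω → ℝ) (p : ι → ℝ)
    (hp0 : ∀ d, 0 ≤ p d) (hp1 : ∀ d, p d ≤ 1)
    (ho01 : ∀ d ω, o d ω = 0 ∨ o d ω = 1) (homeas : ∀ d, Measurable (o d))
    (hoE : ∀ d, ∫ ω, o d ω ∂P = p d)
    (hindep : iIndepFun o P)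
    (c : ι → ℝ) (ε : ℝ) (hε : 0 < ε) (hV : 0 < ∑ d, (c d)^2) :
    P ({ω | ε ≤ ∑ d, c d * (o d ω - p d)} ∪ {ω | ∑ d, c d * (o d ω - p d) ≤ -ε})
      ≤ ENNReal.ofReal (2 * Real.exp (-2 * ε^2 / ∑ d, (c d)^2)) := by
  have h1 := hoeff_tail P o p hp0 hp1 ho01 homeas hoE hindep c ε hε hV
  have h2 := hoeff_tail P o p hp0 hp1 ho01 homeas hoE hindep (fun d => -(c d)) ε hε
    (by simpa using hV)
  have hsetneg : {ω | ε ≤ ∑ d, -(c d) * (o d ω - p d)} =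
      {ω | ∑ d, c d * (o d ω - p d) ≤ -ε} := by
    ext ω
    simp only [Set.mem_setOf_eq, neg_mul, Finset.sum_neg_distrib, le_neg]
  rw [hsetneg] at h2
  simp only [neg_sq] at h2
  refine (measure_union_le _ _).trans ?_
  have hb : (0:ℝ) ≤ Real.exp (-2 * ε^2 / ∑ d, (c d)^2) := (Real.exp_pos _).le
  have e1 : P {ω | ε ≤ ∑ d, c d * (o d ω - p d)} ≤
      ENNReal.ofReal (Real.exp (-2 * ε^2 / ∑ d, (c d)^2)) :=
    (ENNReal.le_ofReal_iff_toReal_le (measure_ne_top P _) hb).mpr h1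
  have e2 : P {ω | ∑ d, c d * (o d ω - p d) ≤ -ε} ≤
      ENNReal.ofReal (Real.exp (-2 * ε^2 / ∑ d, (c d)^2)) :=
    (ENNReal.le_ofReal_iff_toReal_le (measure_ne_top P _) hb).mpr h2
  calc P {ω | ε ≤ ∑ d, c d * (o d ω - p d)} + P {ω | ∑ d, c d * (o d ω - p d) ≤ -ε}
      ≤ ENNReal.ofReal (Real.exp (-2 * ε^2 / ∑ d, (c d)^2)) +
        ENNReal.ofReal (Real.exp (-2 * ε^2 / ∑ d, (c d)^2)) := add_le_add e1 e2
    _ = ENNReal.ofReal (2 * Real.exp (-2 * ε^2 / ∑ d, (c d)^2)) := by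
        rw [← ENNReal.ofReal_add hb hb]; ring_nf

/-- Uniform concentration over a finite hypothesis class: with
probability at least `1 − η`, for all `h ∈ H` simultaneously,
`|L_DR^h − E[L_DR^h]| ≤ sqrt( log(2|H|/η) · M / (2|D|²) )`, where
`M = max_{h∈H} Σ_{d∈D} ((e^h_d − ê_d)/p̂_d)²` and `(o_d)` is independent. -/
theorem uniform_concentration_DR_loss
    {Ω : Type*} [MeasurableSpace Ω] (P : Measure Ω) [IsProbabilityMeasure P]
    {ι : Type*} [Fintype ι] [Nonempty ι]
    (p phat ehat : ι → ℝ) (o : ι → Ω → ℝ)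
    (hp : ∀ d, p d ∈ Set.Icc (0 : ℝ) 1)
    (hphat : ∀ d, phat d ∈ Set.Ioc (0 : ℝ) 1)
    (ho01 : ∀ d ω, o d ω = 0 ∨ o d ω = 1)
    (homeas : ∀ d, Measurable (o d))
    (hoE : ∀ d, ∫ ω, o d ω ∂P = p d)
    (hindep : iIndepFun o P)
    {H : Type*} [Fintype H] [Nonempty H]
    (eH : H → ι → ℝ)
    (M : ℝ)
    (hM : M = Finset.univ.sup' Finset.univ_nonempty
      (fun h => ∑ d, ((eH h d - ehat d) / phat d) ^ 2))
    (hMpos : 0 < M)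
    (η : ℝ) (hη : η ∈ Set.Ioo (0 : ℝ) 1) :
    ENNReal.ofReal (1 - η) ≤
      P {ω | ∀ h : H,
        |(1 / (Fintype.card ι : ℝ)) *
            (∑ d, (ehat d + o d ω * (eH h d - ehat d) / phat d))
          - ∫ ω', (1 / (Fintype.card ι : ℝ)) *
            (∑ d, (ehat d + o d ω' * (eH h d - ehat d) / phat d)) ∂P|
          ≤ Real.sqrt (Real.log (2 * (Fintype.card H : ℝ) / η) * M /
              (2 * (Fintype.card ι : ℝ) ^ 2))} := by
  obtain ⟨hη0, hη1⟩ := hη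
  have hn : (0:ℝ) < (Fintype.card ι : ℝ) := by
    exact_mod_cast Fintype.card_pos
  have hcH : (0:ℝ) < (Fintype.card H : ℝ) := by
    exact_mod_cast Fintype.card_pos
  set n : ℝ := (Fintype.card ι : ℝ) with hndef
  set K : ℝ := Real.log (2 * (Fintype.card H : ℝ) / η) with hKdef
  have hratio : (1:ℝ) < 2 * (Fintype.card H : ℝ) / η := by
    rw [lt_div_iff₀ hη0]
    have h1 : (1:ℝ) ≤ (Fintype.card H : ℝ) := by exact_mod_cast Fintype.card_pos
    nlinarith
  have hK : 0 < K := Real.log_pos hratio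
  set ε : ℝ := Real.sqrt (K * M / 2) with hεdef
  have hε : 0 < ε := Real.sqrt_pos.mpr (by positivity)
  set B : ℝ := Real.sqrt (K * M / (2 * n ^ 2)) with hBdef
  have hεB : ε = n * B := by
    rw [hεdef, hBdef]
    rw [show n * Real.sqrt (K * M / (2 * n ^ 2)) =
      Real.sqrt (n^2) * Real.sqrt (K * M / (2 * n ^ 2)) by rw [Real.sqrt_sq hn.le]]
    rw [← Real.sqrt_mul (sq_nonneg n)]
    congr 1
    field_simp
  -- coefficients
  set cc : H → ι → ℝ := fun h d => (eH h d - ehat d) / phat d with hccdef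
  have hVM : ∀ h, ∑ d, (cc h d)^2 ≤ M := fun h => by
    rw [hM]; simp only [hccdef]
    exact Finset.le_sup' (fun h : H => ∑ d, ((eH h d - ehat d) / phat d) ^ 2) (mem_univ h)
  have hoint : ∀ d, Integrable (o d) P := fun d => o_integrable P (o d) (ho01 d) (homeas d)
  have hterm_int : ∀ (h : H) d,
      Integrable (fun ω => ehat d + o d ω * (eH h d - ehat d) / phat d) P := by
    intro h d
    have heq : (fun ω => ehat d + o d ω * (eH h d - ehat d) / phat d) =
        (fun ω => ehat d + o d ω * ((eH h d - ehat d) / phat d)) := by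
      funext ω; ring
    rw [heq]
    exact (integrable_const (ehat d)).add ((hoint d).mul_const _)
  have hEL : ∀ h : H,
      ∫ ω', (1 / n) * (∑ d, (ehat d + o d ω' * (eH h d - ehat d) / phat d)) ∂P
      = (1 / n) * ∑ d, (ehat d + p d * cc h d) := by
    intro h
    rw [integral_const_mul]
    congr 1
    rw [integral_finset_sum univ (fun d _ => hterm_int h d)]
    refine Finset.sum_congr rfl (fun d _ => ?_)
    calc ∫ ω, (ehat d + o d ω * (eH h d - ehat d) / phat d) ∂P
        = ∫ ω, (ehat d + o d ω * cc h d) ∂P := by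
          congr 1; funext ω; rw [hccdef]; ring
      _ = ehat d + p d * cc h d := by
          rw [integral_add (integrable_const _) ((hoint d).mul_const _),
            integral_const, integral_mul_const, hoE d]
          simp
  have hdev : ∀ (h : H) ω,
      (1 / n) * (∑ d, (ehat d + o d ω * (eH h d - ehat d) / phat d))
        - ∫ ω', (1 / n) * (∑ d, (ehat d + o d ω' * (eH h d - ehat d) / phat d)) ∂P
      = (1 / n) * ∑ d, cc h d * (o d ω - p d) := by
    intro h ω
    rw [hEL h, ← mul_sub, ← Finset.sum_sub_distrib]
    congr 1
    refine Finset.sum_congr rfl (fun d _ => ?_)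
    rw [hccdef]; ring
  -- the bad sets
  set S : H → Set Ω := fun h =>
    {ω | ε ≤ ∑ d, cc h d * (o d ω - p d)} ∪ {ω | ∑ d, cc h d * (o d ω - p d) ≤ -ε}
    with hSdef
  have hSbound : ∀ h, P (S h) ≤ ENNReal.ofReal (η / (Fintype.card H : ℝ)) := by
    intro h
    rcases eq_or_lt_of_le (Finset.sum_nonneg (fun d (_ : d ∈ univ) => sq_nonneg (cc h d)))
      with hV0 | hVpos
    · -- all coefficients zero
      have hzero : ∀ d, cc h d = 0 := by
        intro d
        have := (Finset.sum_eq_zero_iff_of_nonneg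
          (fun d (_ : d ∈ univ) => sq_nonneg (cc h d))).mp hV0.symm d (mem_univ d)
        exact pow_eq_zero_iff (by norm_num) |>.mp this
      have hsum0 : ∀ ω, ∑ d, cc h d * (o d ω - p d) = 0 := fun ω =>
        Finset.sum_eq_zero (fun d _ => by rw [hzero d]; ring)
      have hempty : S h = ∅ := by
        rw [hSdef]
        ext ω
        simp only [Set.mem_union, Set.mem_setOf_eq, hsum0 ω, Set.mem_empty_iff_false, iff_false]
        rintro (hc | hc) <;> linarith
      rw [hempty, measure_empty]
      exact zero_le
    · have hbound := hoeff_two P o p (fun d => (hp d).1) (fun d => (hp d).2)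
        ho01 homeas hoE hindep (cc h) ε hε hVpos
      refine hbound.trans (ENNReal.ofReal_le_ofReal ?_)
      have hεsq : ε ^ 2 = K * M / 2 := Real.sq_sqrt (by positivity)
      have hexp1 : -2 * ε^2 / ∑ d, (cc h d)^2 = -(K * M / ∑ d, (cc h d)^2) := by
        rw [hεsq]; ring
      have hKle : K ≤ K * M / ∑ d, (cc h d)^2 := by
        rw [le_div_iff₀ hVpos]
        exact mul_le_mul_of_nonneg_left (hVM h) hK.le
      have hexp2 : Real.exp (-2 * ε^2 / ∑ d, (cc h d)^2) ≤ η / (2 * (Fintype.card H : ℝ)) := by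
        rw [hexp1]
        calc Real.exp (-(K * M / ∑ d, (cc h d)^2)) ≤ Real.exp (-K) :=
              Real.exp_le_exp.mpr (by linarith)
          _ = η / (2 * (Fintype.card H : ℝ)) := by
              rw [hKdef, Real.exp_neg, Real.exp_log (by positivity), inv_div]
      calc 2 * Real.exp (-2 * ε^2 / ∑ d, (cc h d)^2)
          ≤ 2 * (η / (2 * (Fintype.card H : ℝ))) := by linarith
        _ = η / (Fintype.card H : ℝ) := by field_simp
  -- complement containment
  set G : Set Ω := {ω | ∀ h : H,
        |(1 / n) * (∑ d, (ehat d + o d ω * (eH h d - ehat d) / phat d))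
          - ∫ ω', (1 / n) * (∑ d, (ehat d + o d ω' * (eH h d - ehat d) / phat d)) ∂P| ≤ B}
    with hGdef
  have hGc : Gᶜ ⊆ ⋃ h, S h := by
    intro ω hω
    rw [hGdef] at hω
    simp only [Set.mem_compl_iff, Set.mem_setOf_eq, not_forall] at hω
    obtain ⟨h, hh⟩ := hω
    rw [hdev h ω] at hh
    push_neg at hh
    have habs : ε < |∑ d, cc h d * (o d ω - p d)| := by
      have h1 : |(1 / n) * ∑ d, cc h d * (o d ω - p d)| =
          |∑ d, cc h d * (o d ω - p d)| / n := by
        rw [abs_mul, abs_of_pos (by positivity : (0:ℝ) < 1 / n)]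
        field_simp
      rw [h1] at hh
      rw [hεB]
      calc n * B < n * (|∑ d, cc h d * (o d ω - p d)| / n) := by
            exact mul_lt_mul_of_pos_left hh hn
        _ = |∑ d, cc h d * (o d ω - p d)| := by field_simp
    refine Set.mem_iUnion.mpr ⟨h, ?_⟩
    simp only [hSdef, Set.mem_union, Set.mem_setOf_eq]
    rcases lt_abs.mp habs with hc | hc
    · exact Or.inl hc.le
    · exact Or.inr (by linarith)
  have hbadP : P Gᶜ ≤ ENNReal.ofReal η := by
    calc P Gᶜ ≤ P (⋃ h, S h) := measure_mono hGc
      _ ≤ ∑' h, P (S h) := measure_iUnion_le _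
      _ ≤ ∑' (x : H), ENNReal.ofReal (η / (Fintype.card H : ℝ)) :=
          ENNReal.tsum_le_tsum hSbound
      _ = (Fintype.card H : ENNReal) * ENNReal.ofReal (η / (Fintype.card H : ℝ)) := by
          rw [tsum_fintype]
          simp [Finset.sum_const, nsmul_eq_mul]
      _ = ENNReal.ofReal ((Fintype.card H : ℝ) * (η / (Fintype.card H : ℝ))) := by
          rw [ENNReal.ofReal_mul (by positivity)]
          congr 1
          exact (ENNReal.ofReal_natCast _).symm
      _ = ENNReal.ofReal η := by
          congr 1
          field_simp
  have hone : (1 : ENNReal) ≤ P G + P Gᶜ := by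
    calc (1 : ENNReal) = P Set.univ := measure_univ.symm
      _ = P (G ∪ Gᶜ) := by rw [Set.union_compl_self]
      _ ≤ P G + P Gᶜ := measure_union_le _ _
  have hfinal : (1 : ENNReal) ≤ P G + ENNReal.ofReal η :=
    hone.trans (add_le_add_right hbadP _)
  have : ENNReal.ofReal (1 - η) = 1 - ENNReal.ofReal η := by
    rw [ENNReal.ofReal_sub _ hη0.le, ENNReal.ofReal_one]
  rw [this]
  exact tsub_le_iff_right.mpr hfinal
end

section
/- (Lemma 2: generalization bound of the DR estimator, uniform version.) Let H be a finite nonempty set and for each h ∈ H let e^h : D → ℝ be the prediction errors of hypothesis h, with doubly robust loss L_DR^h = (1/|D|) Σ_{d∈D} ( ê_d + o_d (e^h_d − ê_d)/p̂_d ) and ideal loss L_ideal^h = (1/|D|) Σ_{d∈D} e^h_d. Assume the family (o_d)_{d∈D} is independent, let M = max_{h∈H} Σ_{d∈D} ((e^h_d − ê_d)/p̂_d)², and assume M > 0. Then for every η ∈ (0,1), with probability at least 1 − η, for all h ∈ H simultaneously, L_ideal^h ≤ L_DR^h + (1/|D|) Σ_{d∈D} ( |p_d − p̂_d| / p̂_d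 ) · |e^h_d − ê_d| + sqrt( log(2|H|/η) · M / (2|D|²) ). -/
open MeasureTheory ProbabilityTheory Finset Real

lemma bern_bound (p u : ℝ) (hp0 : 0 ≤ p) (hp1 : p ≤ 1) :
    1 - p + p * Real.exp u ≤ Real.exp (p * u + u ^ 2 / 8) := by
  have hD : ∀ x : ℝ, 0 < 1 - p + p * Real.exp x := by
    intro x
    rcases eq_or_lt_of_le hp0 with h | h
    · simp [← h]
    · have := Real.exp_pos x
      nlinarith
  set g : ℝ → ℝ := fun u => p * u + u ^ 2 / 8 - Real.log (1 - p + p * Real.exp u) with hgdef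
  set g1 : ℝ → ℝ := fun u => p + u / 4 - p * Real.exp u / (1 - p + p * Real.exp u) with hg1def
  have hDd : ∀ x : ℝ, HasDerivAt (fun y => 1 - p + p * Real.exp y) (p * Real.exp x) x := by
    intro x
    exact ((Real.hasDerivAt_exp x).const_mul p).const_add (1 - p)
  have hg : ∀ x, HasDerivAt g (g1 x) x := by
    intro x
    have h2 : HasDerivAt (fun y => Real.log (1 - p + p * Real.exp y))
        (p * Real.exp x / (1 - p + p * Real.exp x)) x := (hDd x).log (hD x).ne'
    have h3 : HasDerivAt (fun y : ℝ => p * y + y ^ 2 / 8) (p + x / 4) x := by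
      have := ((hasDerivAt_id x).const_mul p).add ((hasDerivAt_pow 2 x).div_const 8)
      convert this using 1
      case e'_9 => simp; ring
      all_goals rfl
    exact (h3.sub h2)
  have hg1 : ∀ x, HasDerivAt g1
      (1 / 4 - (1 - p) * (p * Real.exp x) / (1 - p + p * Real.exp x) ^ 2) x := by
    intro x
    have hf : HasDerivAt (fun y => p * Real.exp y) (p * Real.exp x) x :=
      (Real.hasDerivAt_exp x).const_mul p
    have hdiv := hf.div (hDd x) (hD x).ne'
    have h3 : HasDerivAt (fun y : ℝ => p + y / 4) (1 / 4) x := by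
      simpa using ((hasDerivAt_id x).div_const 4).const_add p
    have := h3.sub hdiv
    convert this using 2
    case e'_9 => ring
    all_goals rfl
  have hg1nonneg : ∀ x : ℝ, 0 ≤ 1 / 4 - (1 - p) * (p * Real.exp x) / (1 - p + p * Real.exp x) ^ 2 := by
    intro x
    rw [sub_nonneg, div_le_iff₀ (pow_pos (hD x) 2)]
    nlinarith [sq_nonneg ((1 - p) - p * Real.exp x), Real.exp_pos x]
  have hg1mono : Monotone g1 :=
    monotone_of_deriv_nonneg (fun x => (hg1 x).differentiableAt)
      (fun x => by rw [(hg1 x).deriv]; exact hg1nonneg x)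
  have hg10 : g1 0 = 0 := by
    simp [hg1def]
  have hg0 : g 0 = 0 := by
    simp [hgdef]
  have hgdiff : Differentiable ℝ g := fun x => (hg x).differentiableAt
  have hgnonneg : 0 ≤ g u := by
    rcases le_total 0 u with hu | hu
    · have hmono : MonotoneOn g (Set.Ici 0) := by
        apply monotoneOn_of_deriv_nonneg (convex_Ici 0) hgdiff.continuous.continuousOn
          hgdiff.differentiableOn
        intro x hx
        rw [(hg x).deriv, ← hg10]
        exact hg1mono (le_of_lt (by simpa using hx))
      have := hmono Set.self_mem_Ici hu hu
      rwa [hg0] at this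
    · have hanti : AntitoneOn g (Set.Iic 0) := by
        apply antitoneOn_of_deriv_nonpos (convex_Iic 0) hgdiff.continuous.continuousOn
          hgdiff.differentiableOn
        intro x hx
        rw [(hg x).deriv, ← hg10]
        exact hg1mono (le_of_lt (by simpa using hx))
      have := hanti hu Set.self_mem_Iic hu
      rwa [hg0] at this
  have hlog : Real.log (1 - p + p * Real.exp u) ≤ p * u + u ^ 2 / 8 := by
    have := hgnonneg
    simp only [hgdef, sub_nonneg] at this
    exact this
  calc 1 - p + p * Real.exp u = Real.exp (Real.log (1 - p + p * Real.exp u)) :=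
        (Real.exp_log (hD u)).symm
    _ ≤ _ := Real.exp_le_exp.2 hlog

lemma mgf_single_s11 {Ω : Type*} [MeasurableSpace Ω] (P : Measure Ω) [IsProbabilityMeasure P]
    (o : Ω → ℝ) (pd c s : ℝ) (ho01 : ∀ ω, o ω = 0 ∨ o ω = 1) (hom : Measurable o)
    (hoE : ∫ ω, o ω ∂P = pd) (hp0 : 0 ≤ pd) (hp1 : pd ≤ 1) :
    mgf (fun ω => c * (pd - o ω)) P s ≤ Real.exp (s ^ 2 * c ^ 2 / 8) := by
  have ho_int : Integrable o P := by
    refine (integrable_const (1 : ℝ)).mono' hom.aestronglyMeasurable ?_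
    filter_upwards with ω
    rcases ho01 ω with h | h <;> simp [h]
  have key : ∀ ω, Real.exp (s * (c * (pd - o ω)))
      = Real.exp (s * c * pd) * (1 + o ω * (Real.exp (-(s * c)) - 1)) := by
    intro ω
    rcases ho01 ω with h | h
    · rw [h]; ring_nf
    · rw [h, one_mul, add_sub_cancel, ← Real.exp_add]
      ring_nf
  have hval : mgf (fun ω => c * (pd - o ω)) P s
      = Real.exp (s * c * pd) * (1 - pd + pd * Real.exp (-(s * c))) := by
    unfold mgf
    simp only [key]
    rw [integral_const_mul, integral_add (integrable_const 1)
      (ho_int.mul_const _), integral_const, integral_mul_const, hoE]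
    simp
    ring
  rw [hval]
  calc Real.exp (s * c * pd) * (1 - pd + pd * Real.exp (-(s * c)))
      ≤ Real.exp (s * c * pd) * Real.exp (pd * (-(s * c)) + (-(s * c)) ^ 2 / 8) := by
        have := bern_bound pd (-(s * c)) hp0 hp1
        exact mul_le_mul_of_nonneg_left this (Real.exp_pos _).le
    _ = Real.exp (s ^ 2 * c ^ 2 / 8) := by
        rw [← Real.exp_add]; ring_nf

lemma tail_bound {Ω : Type*} [MeasurableSpace Ω] (P : Measure Ω) [IsProbabilityMeasure P]
    {ι : Type*} [Fintype ι]
    (p : ι → ℝ) (c : ι → ℝ) (o : ι → Ω → ℝ)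
    (hp : ∀ d, p d ∈ Set.Icc (0 : ℝ) 1)
    (ho01 : ∀ d ω, o d ω = 0 ∨ o d ω = 1)
    (homeas : ∀ d, Measurable (o d))
    (hoE : ∀ d, ∫ ω, o d ω ∂P = p d)
    (hindep : iIndepFun o P)
    (M ε : ℝ) (hMc : ∑ d, c d ^ 2 ≤ M) (hMpos : 0 < M) (hε : 0 < ε) :
    (P {ω | ε ≤ ∑ d, c d * (p d - o d ω)}).toReal ≤ Real.exp (-(2 * ε ^ 2 / M)) := by
  set s : ℝ := 4 * ε / M with hsdef
  have hs : 0 ≤ s := by positivity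
  set X : ι → Ω → ℝ := fun d ω => c d * (p d - o d ω) with hXdef
  have hXmeas : ∀ d, Measurable (X d) :=
    fun d => (measurable_const.sub (homeas d)).const_mul _
  have hXind : iIndepFun X P := by
    have := hindep.comp (fun d (x : ℝ) => c d * (p d - x))
      (fun d => (measurable_const.sub measurable_id).const_mul _)
    exact this
  have habs1 : ∀ d ω, |p d - o d ω| ≤ 1 := by
    intro d ω
    rcases ho01 d ω with h | h <;> rw [h] <;>
      [rw [sub_zero]; skip] <;>
      exact abs_le.2 ⟨by linarith [(hp d).1, (hp d).2], by linarith [(hp d).1, (hp d).2]⟩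
  have hXint : ∀ d, Integrable (fun ω => Real.exp (s * X d ω)) P := by
    intro d
    refine (integrable_const (Real.exp (|s| * |c d|))).mono'
      (((hXmeas d).const_mul s).exp.aestronglyMeasurable) ?_
    filter_upwards with ω
    rw [Real.norm_eq_abs, Real.abs_exp]
    apply Real.exp_le_exp.2
    calc s * X d ω ≤ |s * X d ω| := le_abs_self _
      _ = |s| * (|c d| * |p d - o d ω|) := by rw [abs_mul, abs_mul]
      _ ≤ |s| * (|c d| * 1) := by gcongr; exact habs1 d ω
      _ = |s| * |c d| := by ring
  have hset : {ω | ε ≤ ∑ d, c d * (p d - o d ω)} = {ω | ε ≤ (∑ d, X d) ω} := by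
    ext ω; simp [Finset.sum_apply, hXdef]
  have hint : Integrable (fun ω => Real.exp (s * (∑ d, X d) ω)) P :=
    hXind.integrable_exp_mul_sum hXmeas (fun d _ => hXint d)
  have chern := measure_ge_le_exp_mul_mgf (μ := P) (X := ∑ d, X d) ε hs hint
  rw [hset]
  refine chern.trans ?_
  rw [hXind.mgf_sum hXmeas univ]
  calc Real.exp (-s * ε) * ∏ d, mgf (X d) P s
      ≤ Real.exp (-s * ε) * ∏ d, Real.exp (s ^ 2 * c d ^ 2 / 8) := by
        apply mul_le_mul_of_nonneg_left _ (Real.exp_pos _).le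
        apply Finset.prod_le_prod (fun d _ => mgf_nonneg)
        intro d _
        exact mgf_single_s11 P (o d) (p d) (c d) s (ho01 d) (homeas d) (hoE d) (hp d).1 (hp d).2
    _ = Real.exp (-s * ε + ∑ d, s ^ 2 * c d ^ 2 / 8) := by
        rw [← Real.exp_sum, ← Real.exp_add]
    _ ≤ Real.exp (-s * ε + s ^ 2 * M / 8) := by
        apply Real.exp_le_exp.2
        have : ∑ d, s ^ 2 * c d ^ 2 / 8 = s ^ 2 / 8 * ∑ d, c d ^ 2 := by
          rw [Finset.mul_sum]; exact Finset.sum_congr rfl (fun d _ => by ring)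
        rw [this]
        nlinarith [sq_nonneg s]
    _ = Real.exp (-(2 * ε ^ 2 / M)) := by
        congr 1
        rw [hsdef]
        field_simp
        ring

/-- Lemma 2: generalization bound of the DR estimator, uniform
version: with probability at least `1 − η`, for all `h ∈ H` simultaneously,
`L_ideal^h ≤ L_DR^h + (1/|D|) Σ_d (|p_d − p̂_d|/p̂_d)·|e^h_d − ê_d|
  + sqrt( log(2|H|/η) · M / (2|D|²) )`, where
`M = max_{h∈H} Σ_{d∈D} ((e^h_d − ê_d)/p̂_d)²` and `(o_d)` is independent. -/
theorem generalization_bound_DR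
    {Ω : Type*} [MeasurableSpace Ω] (P : Measure Ω) [IsProbabilityMeasure P]
    {ι : Type*} [Fintype ι] [Nonempty ι]
    (p phat ehat : ι → ℝ) (o : ι → Ω → ℝ)
    (hp : ∀ d, p d ∈ Set.Icc (0 : ℝ) 1)
    (hphat : ∀ d, phat d ∈ Set.Ioc (0 : ℝ) 1)
    (ho01 : ∀ d ω, o d ω = 0 ∨ o d ω = 1)
    (homeas : ∀ d, Measurable (o d))
    (hoE : ∀ d, ∫ ω, o d ω ∂P = p d)
    (hindep : iIndepFun o P)
    {H : Type*} [Fintype H] [Nonempty H]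
    (eH : H → ι → ℝ)
    (M : ℝ)
    (hM : M = Finset.univ.sup' Finset.univ_nonempty
      (fun h => ∑ d, ((eH h d - ehat d) / phat d) ^ 2))
    (hMpos : 0 < M)
    (η : ℝ) (hη : η ∈ Set.Ioo (0 : ℝ) 1) :
    ENNReal.ofReal (1 - η) ≤
      P {ω | ∀ h : H,
        (1 / (Fintype.card ι : ℝ)) * ∑ d, eH h d
          ≤ (1 / (Fintype.card ι : ℝ)) *
              (∑ d, (ehat d + o d ω * (eH h d - ehat d) / phat d))
            + (1 / (Fintype.card ι : ℝ)) *
              ∑ d, (|p d - phat d| / phat d) * |eH h d - ehat d|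
            + Real.sqrt (Real.log (2 * (Fintype.card H : ℝ) / η) * M /
                (2 * (Fintype.card ι : ℝ) ^ 2))} := by
  obtain ⟨hη0, hη1⟩ := hη
  have hn : (0 : ℝ) < (Fintype.card ι : ℝ) := by
    exact_mod_cast Fintype.card_pos
  have hcardH : (1 : ℝ) ≤ (Fintype.card H : ℝ) := by
    exact_mod_cast Fintype.card_pos
  set n : ℝ := (Fintype.card ι : ℝ) with hndef
  set cardH : ℝ := (Fintype.card H : ℝ) with hcHdef
  set c : H → ι → ℝ := fun h d => (eH h d - ehat d) / phat d with hcdef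
  have hlogpos : 0 < Real.log (2 * cardH / η) :=
    Real.log_pos (by rw [lt_div_iff₀ hη0]; linarith)
  set τ : ℝ := Real.sqrt (Real.log (2 * cardH / η) * M / (2 * n ^ 2)) with hτdef
  have hτ2 : τ ^ 2 = Real.log (2 * cardH / η) * M / (2 * n ^ 2) :=
    Real.sq_sqrt (by positivity)
  have hτpos : 0 < τ := Real.sqrt_pos.2 (by positivity)
  set ε : ℝ := n * τ with hεdef
  have hε : 0 < ε := by positivity
  set S : H → Set Ω := fun h => {ω | ε ≤ ∑ d, c h d * (p d - o d ω)} with hSdef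
  -- per-hypothesis tail bound
  have tail : ∀ h : H, P (S h) ≤ ENNReal.ofReal (η / (2 * cardH)) := by
    intro h
    have hMc : ∑ d, c h d ^ 2 ≤ M := by
      rw [hM]
      exact Finset.le_sup' (fun h => ∑ d, ((eH h d - ehat d) / phat d) ^ 2) (Finset.mem_univ h)
    have hb := tail_bound P p (c h) o hp ho01 homeas hoE hindep M ε hMc hMpos hε
    have hexp : Real.exp (-(2 * ε ^ 2 / M)) = η / (2 * cardH) := by
      have harg : 2 * ε ^ 2 / M = Real.log (2 * cardH / η) := by
        rw [hεdef, mul_pow, hτ2]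
        field_simp
      rw [harg, Real.exp_neg, Real.exp_log (by positivity), inv_div]
    rw [hexp] at hb
    exact (ENNReal.le_ofReal_iff_toReal_le (measure_ne_top P _) (by positivity)).2 hb
  -- complement inclusion
  set G : Set Ω := {ω | ∀ h : H,
        (1 / n) * ∑ d, eH h d
          ≤ (1 / n) * (∑ d, (ehat d + o d ω * (eH h d - ehat d) / phat d))
            + (1 / n) * ∑ d, (|p d - phat d| / phat d) * |eH h d - ehat d| + τ} with hGdef
  have hsubset : Gᶜ ⊆ ⋃ h : H, S h := by
    intro ω hω
    simp only [hGdef, Set.mem_compl_iff, Set.mem_setOf_eq, not_forall, not_le] at hω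
    obtain ⟨h, hh⟩ := hω
    refine Set.mem_iUnion.2 ⟨h, ?_⟩
    show ε ≤ ∑ d, c h d * (p d - o d ω)
    have term : ∀ d, eH h d - (ehat d + o d ω * (eH h d - ehat d) / phat d)
        - (|p d - phat d| / phat d) * |eH h d - ehat d| ≤ c h d * (p d - o d ω) := by
      intro d
      have hph := (hphat d).1
      have he : eH h d - ehat d = c h d * phat d := by
        simp only [hcdef]
        rw [div_mul_cancel₀ _ hph.ne']
      have h2 : o d ω * (eH h d - ehat d) / phat d = o d ω * c h d := by
        rw [mul_div_assoc]
      have habs : (|p d - phat d| / phat d) * |eH h d - ehat d|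
          = |p d - phat d| * |c h d| := by
        have hc' : |c h d| = |eH h d - ehat d| / phat d := by
          simp only [hcdef]
          rw [abs_div, abs_of_pos hph]
        rw [hc']; ring
      have h1 : c h d * (phat d - p d) ≤ |p d - phat d| * |c h d| := by
        calc c h d * (phat d - p d) ≤ |c h d * (phat d - p d)| := le_abs_self _
          _ = |p d - phat d| * |c h d| := by
              rw [abs_mul, abs_sub_comm]; ring
      rw [h2, habs]
      nlinarith [h1, he]
    have hsum : (∑ d, eH h d)
        - (∑ d, (ehat d + o d ω * (eH h d - ehat d) / phat d))
        - (∑ d, (|p d - phat d| / phat d) * |eH h d - ehat d|)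
        ≤ ∑ d, c h d * (p d - o d ω) := by
      rw [← Finset.sum_sub_distrib, ← Finset.sum_sub_distrib]
      exact Finset.sum_le_sum (fun d _ => term d)
    have hh' := mul_lt_mul_of_pos_left hh hn
    have hsimp : ∀ x : ℝ, n * ((1 / n) * x) = x := fun x => by
      field_simp
    rw [mul_add, mul_add, hsimp, hsimp, hsimp] at hh'
    linarith [hsum, hh']
  -- union bound
  have h4 : P Gᶜ ≤ ∑' h : H, P (S h) :=
    le_trans (measure_mono hsubset) (measure_iUnion_le _)
  rw [tsum_fintype] at h4
  have h6 : P Gᶜ ≤ ENNReal.ofReal η := by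
    refine h4.trans (le_trans (Finset.sum_le_sum (fun h _ => tail h)) ?_)
    rw [Finset.sum_const, Finset.card_univ, nsmul_eq_mul]
    calc (Fintype.card H : ENNReal) * ENNReal.ofReal (η / (2 * cardH))
        = ENNReal.ofReal (cardH * (η / (2 * cardH))) := by
          rw [ENNReal.ofReal_mul (by positivity)]
          congr 1
          rw [hcHdef]
          exact (ENNReal.ofReal_natCast _).symm
      _ ≤ ENNReal.ofReal η := by
          apply ENNReal.ofReal_le_ofReal
          have hch : cardH ≠ 0 := by linarith
          have : cardH * (η / (2 * cardH)) = η / 2 := by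
            field_simp
          rw [this]; linarith
  have huniv : (1 : ENNReal) ≤ P G + P Gᶜ := by
    calc (1 : ENNReal) = P Set.univ := measure_univ.symm
      _ = P (G ∪ Gᶜ) := by rw [Set.union_compl_self]
      _ ≤ P G + P Gᶜ := measure_union_le _ _
  show ENNReal.ofReal (1 - η) ≤ P G
  calc ENNReal.ofReal (1 - η) = 1 - ENNReal.ofReal η := by
        rw [ENNReal.ofReal_sub _ hη0.le, ENNReal.ofReal_one]
    _ ≤ P G := by
        rw [tsub_le_iff_right]
        calc (1 : ENNReal) ≤ P G + P Gᶜ := huniv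
          _ ≤ P G + ENNReal.ofReal η := add_le_add_right h6 _
end
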